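/- For every finite Borel partition [ω]^ω = P₀ ∪ P₁ ∪ ... ∪ P_{k-1} of the infinite subsets of ℕ, there exists an infinite H ⊆ ℕ and an index i < k such that [H]^ω ⊆ P_i. -/

import Mathlib

/-- `[ω]^ω` as a subspace of Cantor space `2^ω` via characteristic functions. -/
def InfCantor : Type := {f : ℕ → Bool // {n | f n = true}.Infinite}

instance : TopologicalSpace InfCantor :=
  instTopologicalSpaceSubtype

instance : MeasurableSpace InfCantor := borel InfCantor

instance : BorelSpace InfCantor := ⟨rfl⟩

/-- `[H]^ω`: the members of `[ω]^ω` all of whose elements lie in `H`. -/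
def cube (H : Set ℕ) : Set InfCantor := {f | ∀ n, f.1 n = true → n ∈ H}

/-!
Call `X ⊆ [ω]^ω` completely Ramsey if every Ellentuck neighbourhood `[a, C]` can be shrunk to some
`[a, D]`, `D ⊆ C` infinite, that lies inside `X` or misses it. Open sets are completely Ramsey by
the Nash-Williams accept/reject argument; complements trivially, and countable unions by a fusion
argument that reduces them to the open case. Hence every Borel set is completely Ramsey. For a
finite Borel partition one asks `P₀, P₁, …` in turn about `[∅, H] = [H]^ω`, shrinking `H` each
time; a piece that is missed drops out, and as the pieces cover, some piece must contain `[H]^ω`.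
-/

open Set

namespace InfCantor

def support (f : InfCantor) : Set ℕ := {n | f.1 n = true}

theorem infinite_support (f : InfCantor) : f.support.Infinite := f.2

def initSeg (f : InfCantor) (N : ℕ) : Finset ℕ := {i ∈ Finset.range N | f.1 i = true}

theorem mem_initSeg {f : InfCantor} {N i : ℕ} : i ∈ f.initSeg N ↔ i < N ∧ i ∈ f.support := by
  simp [initSeg, support]

theorem initSeg_eq_iff {f g : InfCantor} {N : ℕ} :
    g.initSeg N = f.initSeg N ↔ g.1 ∈ PiNat.cylinder f.1 N := by
  simp only [Finset.ext_iff, mem_initSeg, PiNat.mem_cylinder_iff, support, mem_ofPred_eq]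
  refine forall_congr' fun i => ?_
  by_cases hi : i < N <;> cases g.1 i <;> cases f.1 i <;> simp [hi]

theorem _root_.IsOpen.exists_initSeg {X : Set InfCantor} (hX : IsOpen X) {f : InfCantor}
    (hf : f ∈ X) : ∃ N, ∀ g : InfCantor, g.initSeg N = f.initSeg N → g ∈ X := by
  obtain ⟨U, hU, rfl⟩ := isOpen_induced_iff.mp hX
  obtain ⟨_, ⟨x, N, rfl⟩, hfx, hxU⟩ :=
    (PiNat.isTopologicalBasis_cylinders fun _ => Bool).exists_subset_of_mem_open hf hU
  refine ⟨N, fun g hg => hxU ?_⟩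
  rw [← PiNat.mem_cylinder_iff_eq.mp hfx]
  exact initSeg_eq_iff.mp hg

theorem isOpen_setOf_exists_initSeg (R : ℕ → Finset ℕ → Prop) :
    IsOpen {f : InfCantor | ∃ N, R N (f.initSeg N)} := by
  rw [ofPred_exists]
  refine isOpen_iUnion fun N => isOpen_iff_forall_mem_open.mpr fun f hf => ?_
  refine ⟨Subtype.val ⁻¹' PiNat.cylinder f.1 N, fun g hg => ?_,
    (PiNat.isOpen_cylinder _ _ _).preimage continuous_subtype_val, PiNat.self_mem_cylinder _ _⟩
  rwa [mem_ofPred_eq, initSeg_eq_iff.mpr hg]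

end InfCantor

namespace GalvinPrikry

open InfCantor

/-- The Ellentuck neighbourhood `[a, B]`; unlike the usual convention, `a` need not lie
below `B`. -/
def ellentuck (a : Finset ℕ) (B : Set ℕ) : Set InfCantor :=
  {f | ↑a ⊆ f.support ∧ f.support ⊆ ↑a ∪ B}

theorem ellentuck_mono {a : Finset ℕ} {B B' : Set ℕ} (h : B ⊆ B') :
    ellentuck a B ⊆ ellentuck a B' :=
  fun _ hf => ⟨hf.1, hf.2.trans (union_subset_union_right _ h)⟩

theorem ellentuck_empty (B : Set ℕ) : ellentuck ∅ B = cube B := by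
  ext f
  simp [ellentuck, cube, support, subset_def]

open scoped Classical in
theorem cube_nonempty {B : Set ℕ} (hB : B.Infinite) : (cube B).Nonempty :=
  ⟨⟨fun n => decide (n ∈ B), by simpa⟩, fun n => by simp⟩

theorem mem_ellentuck_union_initSeg {f : InfCantor} {a : Finset ℕ} {B : Set ℕ}
    (hf : f ∈ ellentuck a B) (N : ℕ) : f ∈ ellentuck (a ∪ f.initSeg N) (B ∩ Ici N) := by
  refine ⟨?_, fun x hx => ?_⟩
  · rw [Finset.coe_union]
    exact union_subset hf.1 fun x hx => (mem_initSeg.mp hx).2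
  · by_cases hxN : x < N
    · exact Or.inl (Finset.mem_union_right _ (mem_initSeg.mpr ⟨hxN, hx⟩))
    · rcases hf.2 hx with hxa | hxB
      · exact Or.inl (Finset.mem_union_left _ hxa)
      · exact Or.inr ⟨hxB, not_lt.mp hxN⟩

theorem initSeg_eq_of_mem_ellentuck {f g : InfCantor} {a : Finset ℕ} {B D : Set ℕ} {N : ℕ}
    (hf : f ∈ ellentuck a B) (hg : g ∈ ellentuck (a ∪ f.initSeg N) D) (hD : D ⊆ Ici N) :
    g.initSeg N = f.initSeg N := by
  ext i
  simp only [mem_initSeg]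
  refine ⟨fun ⟨hiN, hi⟩ => ⟨hiN, ?_⟩,
    fun ⟨hiN, hi⟩ => ⟨hiN, hg.1 (by simp [mem_initSeg, hiN, hi])⟩⟩
  rcases hg.2 hi with hi | hi
  · rcases Finset.mem_union.mp hi with hi | hi
    · exact hf.1 hi
    · exact (mem_initSeg.mp hi).2
  · exact absurd (hD hi) (not_le.mpr hiN)

def tailAbove (b : Finset ℕ) (B : Set ℕ) : Set ℕ := {n ∈ B | ∀ x ∈ b, x < n}

theorem tailAbove_empty (B : Set ℕ) : tailAbove ∅ B = B := by
  simp [tailAbove]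

theorem tailAbove_insert (n : ℕ) (b : Finset ℕ) (B : Set ℕ) :
    tailAbove (insert n b) B = tailAbove b B ∩ Ioi n := by
  ext m
  simp [tailAbove, and_comm, and_assoc]

theorem inter_Ici_subset_tailAbove {b : Finset ℕ} {N : ℕ} (h : ∀ x ∈ b, x < N) (B : Set ℕ) :
    B ∩ Ici N ⊆ tailAbove b B :=
  fun _ hn => ⟨hn.1, fun x hx => (h x hx).trans_le hn.2⟩

theorem _root_.Set.Infinite.inter_Ici {α : Type*} [LinearOrder α] [LocallyFiniteOrderBot α]
    {B : Set α} (hB : B.Infinite) (N : α) : (B ∩ Ici N).Infinite := by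
  rw [← sdiff_compl, compl_Ici]
  exact hB.sdiff (finite_Iio N)

def DenseOpen (Q : Set ℕ → Prop) : Prop :=
  Antitone Q ∧ ∀ C : Set ℕ, C.Infinite → ∃ D ⊆ C, D.Infinite ∧ Q D

theorem DenseOpen.and {Q₁ Q₂ : Set ℕ → Prop} (h₁ : DenseOpen Q₁) (h₂ : DenseOpen Q₂) :
    DenseOpen fun C => Q₁ C ∧ Q₂ C := by
  refine ⟨fun C D hCD hD => ⟨h₁.1 hCD hD.1, h₂.1 hCD hD.2⟩, fun C hC => ?_⟩
  obtain ⟨D₁, hD₁C, hD₁, hQ₁⟩ := h₁.2 C hC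
  obtain ⟨D₂, hD₂D₁, hD₂, hQ₂⟩ := h₂.2 D₁ hD₁
  exact ⟨D₂, hD₂D₁.trans hD₁C, hD₂, h₁.1 hD₂D₁ hQ₁, hQ₂⟩

theorem denseOpen_finset_forall {ι : Type*} [DecidableEq ι] {Q : ι → Set ℕ → Prop}
    (s : Finset ι) (h : ∀ i ∈ s, DenseOpen (Q i)) : DenseOpen fun C => ∀ i ∈ s, Q i C := by
  induction s using Finset.induction_on with
  | empty => exact ⟨fun _ _ _ _ => by simp, fun C hC => ⟨C, subset_rfl, hC, by simp⟩⟩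
  | insert i s _ ih =>
    simpa only [Finset.forall_mem_insert] using
      (h i (s.mem_insert_self i)).and (ih fun j hj => h j (Finset.mem_insert_of_mem hj))

theorem exists_tailAbove_range_subset {s : ℕ → ℕ} (hs : StrictMono s) {b : Finset ℕ}
    (hb : ↑b ⊆ range s) :
    ∃ k, b ⊆ (Finset.range k).image s ∧ tailAbove b (range s) ⊆ s '' Ici k := by
  classical
  have hex : ∃ k, b ⊆ (Finset.range k).image s := by
    refine ⟨b.sup id + 1, fun x hx => ?_⟩
    obtain ⟨j, rfl⟩ := hb hx
    exact Finset.mem_image_of_mem s (Finset.mem_range.mpr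
      (Nat.lt_succ_of_le ((hs.id_le j).trans (Finset.le_sup (f := id) hx))))
  -- `k` is least with `b ⊆ s '' Iio k`, so `s (k - 1) ∈ b` and every `s j` above `b` has `k ≤ j`
  refine ⟨Nat.find hex, Nat.find_spec hex, ?_⟩
  rintro _ ⟨⟨j, rfl⟩, hj⟩
  refine ⟨j, mem_Ici.mpr (not_lt.mp fun hjk => ?_), rfl⟩
  obtain ⟨k, hk⟩ := Nat.exists_eq_succ_of_ne_zero (show Nat.find hex ≠ 0 by omega)
  obtain ⟨_, hxb, hx⟩ := Finset.not_subset.mp (Nat.find_min hex (show k < Nat.find hex by omega))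
  obtain ⟨i, hi, rfl⟩ := Finset.mem_image.mp (hk ▸ Nat.find_spec hex hxb)
  have hik : i = k := by
    by_contra hne
    exact hx (Finset.mem_image_of_mem s (by simp only [Finset.mem_range] at hi ⊢; omega))
  have := hs.lt_iff_lt.mp (hj _ hxb)
  omega

/-- Fusion: `s n` is the least element of an infinite set, shrunk from the previous one, on which
`P b` holds for every `b ⊆ {s 0, …, s (n-1)}`; then `B = range s`. -/
theorem exists_diagonal {P : Finset ℕ → Set ℕ → Prop} (hP : ∀ b, DenseOpen (P b))
    {A : Set ℕ} (hA : A.Infinite) :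
    ∃ B ⊆ A, B.Infinite ∧ ∀ b : Finset ℕ, ↑b ⊆ B → P b (tailAbove b B) := by
  classical
  have hshrink (c : Finset ℕ) (C : {C : Set ℕ // C.Infinite}) :
      ∃ D : {D : Set ℕ // D.Infinite}, D.1 ⊆ C.1 ∧ ∀ b ⊆ c, P b D.1 := by
    obtain ⟨D, hDC, hD, hPD⟩ := (denseOpen_finset_forall c.powerset fun b _ => hP b).2 C.1 C.2
    exact ⟨⟨D, hD⟩, hDC, fun b hb => hPD b (Finset.mem_powerset.mpr hb)⟩
  choose shrink shrink_subset shrink_spec using hshrink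
  let next (x : Finset ℕ × {C : Set ℕ // C.Infinite}) : Finset ℕ × {C : Set ℕ // C.Infinite} :=
    let D := shrink x.1 x.2
    (insert (sInf D.1) x.1, ⟨D.1 ∩ Ici (sInf D.1 + 1), D.2.inter_Ici _⟩)
  let st (n : ℕ) := next^[n] (∅, ⟨A, hA⟩)
  let D (n : ℕ) : Set ℕ := (shrink (st n).1 (st n).2).1
  let s (n : ℕ) : ℕ := sInf (D n)
  have hst (n : ℕ) : st (n + 1) = next (st n) := Function.iterate_succ_apply' _ _ _
  have hsD (n : ℕ) : s n ∈ D n := Nat.sInf_mem (shrink _ _).2.nonempty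
  have hDsucc (n : ℕ) : D (n + 1) ⊆ D n ∩ Ici (s n + 1) := by
    change ((shrink (st (n + 1)).1 (st (n + 1)).2).1 ⊆ _)
    rw [hst]
    exact shrink_subset _ _
  have hanti : Antitone D := antitone_nat_of_succ_le fun n => (hDsucc n).trans inter_subset_left
  have hs : StrictMono s := strictMono_nat_of_lt_succ fun n => (hDsucc n (hsD (n + 1))).2
  have hc (n : ℕ) : (st n).1 = (Finset.range n).image s := by
    induction n with
    | zero => rfl
    | succ n ih => rw [hst, Finset.range_add_one, Finset.image_insert, ← ih]
  refine ⟨range s, ?_, infinite_range_of_injective hs.injective, fun b hb => ?_⟩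
  · rintro _ ⟨n, rfl⟩
    exact shrink_subset _ _ (hanti (Nat.zero_le n) (hsD n))
  · obtain ⟨k, hbk, htail⟩ := exists_tailAbove_range_subset hs hb
    refine (hP b).1 (htail.trans ?_) (shrink_spec (st k).1 (st k).2 b (hc k ▸ hbk))
    rintro _ ⟨j, hj, rfl⟩
    exact hanti hj (hsD j)

theorem denseOpen_imp {p : Prop} {Q : Set ℕ → Prop} (h : p → DenseOpen Q) :
    DenseOpen fun C => p → Q C := by
  by_cases hp : p
  · simpa [hp] using h hp
  · simpa [hp] using ⟨fun _ _ _ _ => trivial, fun C hC => ⟨C, subset_rfl, hC, trivial⟩⟩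

theorem coe_initSeg_sdiff_subset {f : InfCantor} {a : Finset ℕ} {B : Set ℕ}
    (hf : f ∈ ellentuck a B) (N : ℕ) : ↑(f.initSeg N \ a) ⊆ B := fun x hx => by
  rw [Finset.coe_sdiff, mem_sdiff, Finset.mem_coe, mem_initSeg] at hx
  exact (hf.2 hx.1.2).resolve_left hx.2

def Decides (X : Set InfCantor) (a : Finset ℕ) (C : Set ℕ) : Prop :=
  ellentuck a C ⊆ X ∨ Disjoint (ellentuck a C) X

def CompletelyRamsey (X : Set InfCantor) : Prop :=
  ∀ (a : Finset ℕ) (C : Set ℕ), C.Infinite → ∃ D ⊆ C, D.Infinite ∧ Decides X a D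

theorem CompletelyRamsey.denseOpen {X : Set InfCantor} (h : CompletelyRamsey X) (a : Finset ℕ) :
    DenseOpen (Decides X a) :=
  ⟨fun _ _ hDC hC => hC.imp (ellentuck_mono hDC).trans (·.mono_left (ellentuck_mono hDC)), h a⟩

theorem decides_compl {X : Set InfCantor} {a : Finset ℕ} {C : Set ℕ} :
    Decides Xᶜ a C ↔ Decides X a C := by
  rw [Decides, Decides, subset_compl_iff_disjoint_right, disjoint_compl_right_iff_subset, or_comm]

theorem CompletelyRamsey.compl {X : Set InfCantor} (h : CompletelyRamsey X) :
    CompletelyRamsey Xᶜ := by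
  simpa only [CompletelyRamsey, decides_compl] using h

def Rejects (X : Set InfCantor) (c : Finset ℕ) (C : Set ℕ) : Prop :=
  ∀ D ⊆ C, D.Infinite → ¬ ellentuck c D ⊆ X

theorem denseOpen_subset_or_rejects (X : Set InfCantor) (c : Finset ℕ) :
    DenseOpen fun C => ellentuck c C ⊆ X ∨ Rejects X c C := by
  refine ⟨fun _ _ hDC hC => hC.imp (ellentuck_mono hDC).trans
    fun hrej E hED => hrej E (hED.trans hDC), fun C hC => ?_⟩
  by_cases hacc : ∃ D ⊆ C, D.Infinite ∧ ellentuck c D ⊆ X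
  · obtain ⟨D, hDC, hD, hDX⟩ := hacc
    exact ⟨D, hDC, hD, Or.inl hDX⟩
  · exact ⟨C, subset_rfl, hC, Or.inr fun D hDC hD hDX => hacc ⟨D, hDC, hD, hDX⟩⟩

/-- Nash-Williams' observation: if infinitely many one-point extensions of `c` were accepted, then
`c` itself would be accepted, by sorting each `f` according to the least element of `f \ c`. -/
theorem Rejects.finite_setOf_ellentuck_insert_subset {X : Set InfCantor} {c : Finset ℕ} {C : Set ℕ}
    (h : Rejects X c C) : {n ∈ C | ellentuck (insert n c) (C ∩ Ioi n) ⊆ X}.Finite := by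
  by_contra hinf
  refine h _ (sep_subset _ _) hinf fun f hf => ?_
  have hne : (f.support \ ↑c).Nonempty := (f.infinite_support.sdiff c.finite_toSet).nonempty
  have hn : sInf (f.support \ ↑c) ∈ f.support \ ↑c := Nat.sInf_mem hne
  refine ((hf.2 hn.1).resolve_left hn.2).2 ⟨?_, fun x hx => ?_⟩
  · rw [Finset.coe_insert]
    exact insert_subset hn.1 hf.1
  · by_cases hxc : x ∈ c
    · exact Or.inl (Finset.mem_insert_of_mem hxc)
    · rcases (Nat.sInf_le ⟨hx, hxc⟩ : sInf (f.support \ ↑c) ≤ x).eq_or_lt with rfl | hlt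
      · exact Or.inl (Finset.mem_insert_self _ _)
      · exact Or.inr ⟨((hf.2 hx).resolve_left hxc).1, hlt⟩

theorem denseOpen_accepts_of_accepts_insert {X : Set InfCantor} {a b : Finset ℕ} {B : Set ℕ}
    (hdec : ellentuck (a ∪ b) (tailAbove b B) ⊆ X ∨ Rejects X (a ∪ b) (tailAbove b B)) :
    DenseOpen fun C => ∀ n ∈ C ∩ tailAbove b B,
      ellentuck (a ∪ insert n b) (tailAbove (insert n b) B) ⊆ X →
        ellentuck (a ∪ b) (tailAbove b B) ⊆ X := by
  refine ⟨fun _ _ hDC h n hn => h n ⟨hDC hn.1, hn.2⟩, fun C hC => ?_⟩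
  rcases hdec with hacc | hrej
  · exact ⟨C, subset_rfl, hC, fun _ _ _ => hacc⟩
  · refine ⟨C \ _, sdiff_subset, hC.sdiff hrej.finite_setOf_ellentuck_insert_subset,
      fun n hn hacc => ?_⟩
    rw [Finset.union_insert, tailAbove_insert] at hacc
    exact absurd ⟨hn.2, hacc⟩ hn.1.2

theorem disjoint_ellentuck_of_rejects {X : Set InfCantor} (hX : IsOpen X) {a : Finset ℕ}
    {B₁ B₂ : Set ℕ} (hB₂B₁ : B₂ ⊆ B₁) (hB₂ : B₂.Infinite)
    (hrej : ∀ b : Finset ℕ, ↑b ⊆ B₂ → Rejects X (a ∪ b) (tailAbove b B₁)) :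
    Disjoint (ellentuck a B₂) X := by
  refine disjoint_left.mpr fun f hf hfX => ?_
  obtain ⟨N, hN⟩ := hX.exists_initSeg hfX
  have hbelow : ∀ x ∈ f.initSeg N \ a, x < N := fun x hx =>
    (mem_initSeg.mp (Finset.mem_sdiff.mp hx).1).1
  refine hrej _ (coe_initSeg_sdiff_subset hf N) (B₂ ∩ Ici N)
    ((inter_subset_inter_left _ hB₂B₁).trans (inter_Ici_subset_tailAbove hbelow B₁))
    (hB₂.inter_Ici N) ?_
  rw [Finset.union_sdiff_self_eq_union]
  exact fun g hg => hN g (initSeg_eq_of_mem_ellentuck hf hg inter_subset_right)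

/-- Shrink `A` to `B₁` on which every `a ∪ b` is accepted or rejected, then to `B₂` on which `a ∪ b`
is accepted as soon as one of its one-point extensions above it is. A rejection of `a` then
propagates to every `a ∪ b` with `b ⊆ B₂`, and an open `X` meeting `[a, B₂]` would accept one. -/
theorem completelyRamsey_of_isOpen {X : Set InfCantor} (hX : IsOpen X) : CompletelyRamsey X := by
  intro a A hA
  obtain ⟨B₁, hB₁A, hB₁, hdec⟩ :=
    exists_diagonal (fun b => denseOpen_subset_or_rejects X (a ∪ b)) hA
  by_cases hacc : ellentuck a B₁ ⊆ X
  · exact ⟨B₁, hB₁A, hB₁, Or.inl hacc⟩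
  obtain ⟨B₂, hB₂B₁, hB₂, hext⟩ := exists_diagonal
    (fun b => denseOpen_imp fun hb : ↑b ⊆ B₁ => denseOpen_accepts_of_accepts_insert (hdec b hb)) hB₁
  have hrej (b : Finset ℕ) (hb : ↑b ⊆ B₂) : Rejects X (a ∪ b) (tailAbove b B₁) := by
    refine (hdec b (hb.trans hB₂B₁)).resolve_left ?_
    induction b using Finset.induction_on_max with
    | empty => simpa [tailAbove_empty] using hacc
    | insert n b hlt ih =>
      rw [Finset.coe_insert, insert_subset_iff] at hb
      exact fun h => ih hb.2 (hext b hb.2 (hb.2.trans hB₂B₁) n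
        ⟨⟨hb.1, hlt⟩, ⟨hB₂B₁ hb.1, hlt⟩⟩ h)
  exact ⟨B₂, hB₂B₁.trans hB₁A, hB₂, Or.inr (disjoint_ellentuck_of_rejects hX hB₂B₁ hB₂ hrej)⟩

/-- Diagonalise so that each `a ∪ b` is decided by `𝒜 m` for all `m ≤ max b`; then apply the
open case to the set of those `g` having an initial segment whose neighbourhood lies in some `𝒜 m`.
-/
theorem CompletelyRamsey.iUnion {𝒜 : ℕ → Set InfCantor} (h : ∀ m, CompletelyRamsey (𝒜 m)) :
    CompletelyRamsey (⋃ m, 𝒜 m) := by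
  intro a A hA
  obtain ⟨B, hBA, hB, hdec⟩ := exists_diagonal
    (P := fun b C => ∀ m ∈ Finset.Iic (b.sup id), Decides (𝒜 m) (a ∪ b) C)
    (fun b => denseOpen_finset_forall _ fun m _ => (h m).denseOpen (a ∪ b)) hA
  obtain ⟨B', hB'B, hB', hU⟩ := completelyRamsey_of_isOpen
    (isOpen_setOf_exists_initSeg fun N c => ∃ m, ellentuck (a ∪ c) (B ∩ Ici N) ⊆ 𝒜 m) a B hB
  refine ⟨B', hB'B.trans hBA, hB', hU.imp (fun hsub f hf => ?_) fun hdisj => ?_⟩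
  · obtain ⟨N, m, hm⟩ := hsub hf
    exact mem_iUnion.mpr ⟨m, hm (mem_ellentuck_union_initSeg (ellentuck_mono hB'B hf) N)⟩
  refine disjoint_iUnion_right.mpr fun m => disjoint_left.mpr fun f hf hfm => ?_
  obtain ⟨x, hx, hmx⟩ := (f.infinite_support.sdiff a.finite_toSet).exists_gt m
  have hfB := ellentuck_mono hB'B hf
  have hxb : x ∈ f.initSeg (x + 1) \ a := by simpa [mem_initSeg] using hx
  have hbelow : ∀ y ∈ f.initSeg (x + 1) \ a, y < x + 1 := fun y hy =>
    (mem_initSeg.mp (Finset.mem_sdiff.mp hy).1).1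
  have hdecm := ((h m).denseOpen _).1 (inter_Ici_subset_tailAbove hbelow B)
    (hdec _ (coe_initSeg_sdiff_subset hfB _) m
      (Finset.mem_Iic.mpr (hmx.le.trans (Finset.le_sup (f := id) hxb))))
  rw [Finset.union_sdiff_self_eq_union] at hdecm
  rcases hdecm with hsub | hdisj'
  · exact disjoint_left.mp hdisj hf ⟨x + 1, m, hsub⟩
  · exact disjoint_left.mp hdisj' (mem_ellentuck_union_initSeg hfB (x + 1)) hfm

theorem completelyRamsey_of_measurableSet {X : Set InfCantor} (hX : MeasurableSet X) :
    CompletelyRamsey X :=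
  MeasurableSet.induction_on_open (C := fun X _ => CompletelyRamsey X)
    (fun _ hU => completelyRamsey_of_isOpen hU) (fun _ _ h => h.compl)
    (fun _ _ _ h => CompletelyRamsey.iUnion h) X hX

theorem exists_cube_subset_of_completelyRamsey {k : ℕ} (P : Fin k → Set InfCantor)
    (hP : ∀ i, CompletelyRamsey (P i)) {A : Set ℕ} (hA : A.Infinite)
    (hcover : cube A ⊆ ⋃ i, P i) : ∃ H ⊆ A, H.Infinite ∧ ∃ i, cube H ⊆ P i := by
  induction k generalizing A with
  | zero =>
    obtain ⟨f, hf⟩ := cube_nonempty hA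
    simpa using hcover hf
  | succ k ih =>
    obtain ⟨B, hBA, hB, hdec⟩ := hP 0 ∅ A hA
    rw [Decides, ellentuck_empty] at hdec
    rcases hdec with hsub | hdisj
    · exact ⟨B, hBA, hB, 0, hsub⟩
    have hcover' : cube B ⊆ ⋃ i : Fin k, P i.succ := fun f hf => by
      obtain ⟨i, hi⟩ := mem_iUnion.mp (hcover fun n hn => hBA (hf n hn))
      cases i using Fin.cases with
      | zero => exact absurd hi (disjoint_left.mp hdisj hf)
      | succ i => exact mem_iUnion.mpr ⟨i, hi⟩
    obtain ⟨H, hHB, hH, i, hi⟩ := ih (fun i => P i.succ) (fun i => hP i.succ) hB hcover'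
    exact ⟨H, hHB.trans hBA, hH, i.succ, hi⟩

end GalvinPrikry

/-- Finite-partition Galvin–Prikry: every finite Borel partition of `[ω]^ω`
has a piece containing `[H]^ω` for some infinite `H`. -/
theorem galvin_prikry_partition (k : ℕ) (P : Fin k → Set InfCantor)
    (hmeas : ∀ i, MeasurableSet (P i)) (hcover : (⋃ i, P i) = Set.univ) :
    ∃ H : Set ℕ, H.Infinite ∧ ∃ i : Fin k, cube H ⊆ P i := by
  obtain ⟨H, -, hH, i, hi⟩ := GalvinPrikry.exists_cube_subset_of_completelyRamsey P
    (fun i => GalvinPrikry.completelyRamsey_of_measurableSet (hmeas i)) infinite_univ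
    (hcover ▸ subset_univ _)
  exact ⟨H, hH, i, hi⟩
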